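/- arXiv:1902.00032 — 12 statements merged into one kernel-verified Lean document; each statement's English description precedes it below -/
import Mathlib

section
/- Let n be a nonempty finite type and let Φ : Matrix n n ℂ →ₗ[ℂ] Matrix n n ℂ be a linear map that is positive (it maps positive semidefinite matrices to positive semidefinite matrices) and trace-preserving ((Φ M).trace = M.trace for all M). Then Φ has a fixed point among density matrices: there exists ρ : Matrix n n ℂ with ρ.PosSemidef, ρ.trace = 1 and Φ ρ = ρ. -/
open scoped ComplexOrder Matrix

attribute [local instance] Matrix.normedAddCommGroup Matrix.normedSpace

namespace DctcAux

variable {n : Type*} [Fintype n]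

/-- smul of PSD by nonneg complex scalar is PSD -/
lemma psd_smul {M : Matrix n n ℂ} (hM : M.PosSemidef) {c : ℂ} (hc : 0 ≤ c) :
    (c • M).PosSemidef := by
  have hcs : star c = c := by
    rw [Complex.star_def, Complex.conj_eq_iff_im]
    exact ((Complex.le_def).mp hc).2.symm
  refine Matrix.PosSemidef.of_dotProduct_mulVec_nonneg ?_ fun x => ?_
  · unfold Matrix.IsHermitian
    rw [Matrix.conjTranspose_smul, hcs, hM.1]
  · rw [Matrix.smul_mulVec, dotProduct_smul, smul_eq_mul]
    exact mul_nonneg hc (hM.dotProduct_mulVec_nonneg x)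

/-- entries of a PSD matrix with trace ≤ 1 are bounded by 1 -/
lemma psd_entry_bound {ρ : Matrix n n ℂ} (hρ : ρ.PosSemidef) (ht : ρ.trace = 1)
    (i j : n) : ‖ρ i j‖ ≤ 1 := by
  classical
  open scoped MatrixOrder in obtain ⟨B, hB⟩ := CStarAlgebra.nonneg_iff_eq_star_mul_self.mp hρ.nonneg
  obtain rfl : ρ = Bᴴ * B := hB
  set v : n → EuclideanSpace ℂ n := fun i => WithLp.toLp 2 (fun k => B k i) with hv
  have hentry : ∀ i j, (Bᴴ * B) i j = inner ℂ (v i) (v j) := by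
    intro i j
    rw [PiLp.inner_apply]
    simp [Matrix.mul_apply, Matrix.conjTranspose_apply, v, RCLike.inner_apply, mul_comm]
  have hdiag : ∀ i, ((Bᴴ * B) i i).re = ‖v i‖ ^ 2 := by
    intro i
    rw [hentry, ← inner_self_eq_norm_sq (𝕜 := ℂ)]
    rfl
  have hdiag_le : ∀ i, ‖v i‖ ^ 2 ≤ 1 := by
    intro i
    have h1 : ∑ k, ((Bᴴ * B) k k).re = 1 := by
      have := congrArg Complex.re ht
      simpa [Matrix.trace, Matrix.diag, Complex.re_sum] using this
    have : ‖v i‖ ^ 2 ≤ ∑ k, ((Bᴴ * B) k k).re := by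
      rw [← hdiag]
      exact Finset.single_le_sum (f := fun k => ((Bᴴ * B) k k).re)
        (fun k _ => by show 0 ≤ ((Bᴴ * B) k k).re; rw [hdiag]; positivity) (Finset.mem_univ i)
    linarith [h1 ▸ this]
  calc ‖(Bᴴ * B) i j‖ = ‖(inner ℂ (v i) (v j) : ℂ)‖ := by rw [hentry]
    _ ≤ ‖v i‖ * ‖v j‖ := norm_inner_le_norm _ _
    _ ≤ 1 * 1 := by
        apply mul_le_mul ?_ ?_ (norm_nonneg _) zero_le_one <;>
          [skip; skip] <;>
          · nlinarith [hdiag_le i, hdiag_le j, norm_nonneg (v i), norm_nonneg (v j)]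
    _ = 1 := one_mul 1

lemma isClosed_K : IsClosed {ρ : Matrix n n ℂ | ρ.PosSemidef ∧ ρ.trace = 1} := by
  classical
  have h1 : IsClosed {ρ : Matrix n n ℂ | ρ.trace = 1} := by
    have : Continuous fun ρ : Matrix n n ℂ => ρ.trace :=
      continuous_finset_sum _ fun i _ => ((continuous_apply i).comp (continuous_apply i))
    exact isClosed_eq this continuous_const
  have h2 : IsClosed {ρ : Matrix n n ℂ | ρ.IsHermitian} := by
    have hc : Continuous fun ρ : Matrix n n ℂ => ρᴴ :=
      Continuous.matrix_conjTranspose continuous_id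
    exact isClosed_eq hc continuous_id
  have h3 : IsClosed {ρ : Matrix n n ℂ | ∀ x : n → ℂ, 0 ≤ dotProduct (star x) (ρ.mulVec x)} := by
    have : {ρ : Matrix n n ℂ | ∀ x : n → ℂ, 0 ≤ dotProduct (star x) (ρ.mulVec x)}
        = ⋂ x : n → ℂ, {ρ : Matrix n n ℂ | 0 ≤ dotProduct (star x) (ρ.mulVec x)} := by
      ext ρ; simp
    rw [this]
    refine isClosed_iInter fun x => ?_
    have hcont : Continuous fun ρ : Matrix n n ℂ => dotProduct (star x) (ρ.mulVec x) :=
      (continuous_const.dotProduct ((continuous_id.matrix_mulVec continuous_const)))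
    have : IsClosed {z : ℂ | 0 ≤ z} := by
      have : {z : ℂ | 0 ≤ z} = Complex.re ⁻¹' Set.Ici 0 ∩ Complex.im ⁻¹' {0} := by
        ext z
        simp [Complex.le_def, eq_comm]
      rw [this]
      exact (isClosed_Ici.preimage Complex.continuous_re).inter
        (isClosed_singleton.preimage Complex.continuous_im)
    exact this.preimage hcont
  have : {ρ : Matrix n n ℂ | ρ.PosSemidef ∧ ρ.trace = 1}
      = ({ρ : Matrix n n ℂ | ρ.IsHermitian} ∩
        {ρ | ∀ x : n → ℂ, 0 ≤ dotProduct (star x) (ρ.mulVec x)}) ∩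
        {ρ | ρ.trace = 1} := by
    ext ρ
    simp [Matrix.posSemidef_iff_dotProduct_mulVec, and_assoc]
  rw [this]
  exact ((h2.inter h3).inter h1)

lemma isCompact_K : IsCompact {ρ : Matrix n n ℂ | ρ.PosSemidef ∧ ρ.trace = 1} := by
  haveI : ProperSpace (Matrix n n ℂ) := FiniteDimensional.proper ℂ _
  refine IsCompact.of_isClosed_subset (isCompact_closedBall 0 1) isClosed_K ?_
  intro ρ ⟨hρ, ht⟩
  rw [Metric.mem_closedBall, dist_zero_right]
  rw [Matrix.norm_le_iff zero_le_one]
  exact fun i j => psd_entry_bound hρ ht i j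

end DctcAux

/-- Every positive trace-preserving linear map on a matrix algebra has a
fixed point among density matrices (Deutsch's D-CTC consistency). -/
theorem dctc_fixed_point_exists {n : Type*} [Fintype n] [Nonempty n]
    (Φ : Matrix n n ℂ →ₗ[ℂ] Matrix n n ℂ)
    (hpos : ∀ M : Matrix n n ℂ, M.PosSemidef → (Φ M).PosSemidef)
    (htr : ∀ M : Matrix n n ℂ, (Φ M).trace = M.trace) :
    ∃ ρ : Matrix n n ℂ, ρ.PosSemidef ∧ ρ.trace = 1 ∧ Φ ρ = ρ := by
  classical
  set K : Set (Matrix n n ℂ) := {ρ | ρ.PosSemidef ∧ ρ.trace = 1} with hK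
  -- initial state
  set ρ₀ : Matrix n n ℂ := ((Fintype.card n : ℂ))⁻¹ • (1 : Matrix n n ℂ) with hρ₀def
  have hcard : (Fintype.card n : ℂ) ≠ 0 := by
    exact_mod_cast Fintype.card_ne_zero
  have hρ₀ : ρ₀ ∈ K := by
    constructor
    · refine DctcAux.psd_smul Matrix.PosSemidef.one ?_
      rw [show ((Fintype.card n : ℂ))⁻¹ = Complex.ofReal ((Fintype.card n : ℝ)⁻¹) by
        rw [Complex.ofReal_inv]; norm_num]
      exact Complex.zero_le_real.mpr (inv_nonneg.mpr (Nat.cast_nonneg _))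
    · simp [ρ₀, Matrix.trace_smul, Matrix.trace_one, inv_mul_cancel₀ hcard]
  -- iterates
  set u : ℕ → Matrix n n ℂ := fun k => (⇑Φ)^[k] ρ₀ with hu_def
  have hu : ∀ k, u k ∈ K := by
    intro k
    induction k with
    | zero => exact hρ₀
    | succ k ih =>
        have : u (k+1) = Φ (u k) := Function.iterate_succ_apply' _ _ _
        rw [this]
        exact ⟨hpos _ ih.1, by rw [htr]; exact ih.2⟩
  have husucc : ∀ k, u (k+1) = Φ (u k) := fun k => Function.iterate_succ_apply' _ _ _
  -- Cesàro averages
  set s : ℕ → Matrix n n ℂ := fun N => (((N : ℂ) + 1))⁻¹ • ∑ k ∈ Finset.range (N+1), u k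
    with hs_def
  have hNc : ∀ N : ℕ, ((N : ℂ) + 1) ≠ 0 := fun N => Nat.cast_add_one_ne_zero N
  have hs : ∀ N, s N ∈ K := by
    intro N
    constructor
    · refine DctcAux.psd_smul ?_ ?_
      · induction (N+1) with
        | zero => simp [Matrix.PosSemidef.zero]
        | succ m ih =>
            rw [Finset.sum_range_succ]
            exact ih.add (hu m).1
      · rw [show (((N:ℂ)+1))⁻¹ = Complex.ofReal (((N:ℝ)+1)⁻¹) by
          rw [Complex.ofReal_inv]; push_cast; ring]
        exact Complex.zero_le_real.mpr (inv_nonneg.mpr (by positivity))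
    · rw [hs_def]
      simp only [Matrix.trace_smul, Matrix.trace_sum]
      rw [Finset.sum_congr rfl fun k _ => (hu k).2]
      simp [smul_eq_mul, inv_mul_cancel₀ (hNc N)]
  -- key telescoping identity
  have key : ∀ N, Φ (s N) - s N = (((N : ℂ) + 1))⁻¹ • (u (N+1) - ρ₀) := by
    intro N
    have hΦs : Φ (s N) = (((N : ℂ) + 1))⁻¹ • ∑ k ∈ Finset.range (N+1), u (k+1) := by
      rw [hs_def, map_smul, map_sum]
      congr 1
      exact Finset.sum_congr rfl fun k _ => (husucc k).symm
    rw [hΦs, hs_def, ← smul_sub]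
    congr 1
    have h1 : ∑ k ∈ Finset.range (N+2), u k
        = (∑ k ∈ Finset.range (N+1), u (k+1)) + u 0 := Finset.sum_range_succ' u (N+1)
    have h2 : ∑ k ∈ Finset.range (N+2), u k
        = (∑ k ∈ Finset.range (N+1), u k) + u (N+1) := Finset.sum_range_succ u (N+1)
    have h3 : (∑ k ∈ Finset.range (N+1), u (k+1)) + u 0
        = (∑ k ∈ Finset.range (N+1), u k) + u (N+1) := by rw [← h1, h2]
    have hu0 : u 0 = ρ₀ := rfl
    rw [hu0] at h3
    have := sub_eq_sub_iff_add_eq_add.mpr h3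
    linear_combination (norm := abel) this
  -- compactness and cluster point
  have hKc : IsCompact K := DctcAux.isCompact_K
  haveI : FirstCountableTopology (Matrix n n ℂ) := inferInstanceAs (FirstCountableTopology (n → n → ℂ))
  obtain ⟨ρ, hρK, φ, hφ, hlim⟩ := hKc.tendsto_subseq hs
  haveI : FiniteDimensional ℂ (Matrix n n ℂ) := by infer_instance
  have hΦcont : Continuous Φ := Φ.continuous_of_finiteDimensional
  -- the difference tends to 0
  have hdiff0 : Filter.Tendsto (fun N => Φ (s N) - s N) Filter.atTop (nhds 0) := by
    apply squeeze_zero_norm (a := fun N : ℕ => (1 / ((N : ℝ) + 1)) * 2)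
    · intro N
      rw [key N]
      rw [norm_smul]
      have hnormc : ‖(((N : ℂ) + 1))⁻¹‖ = 1 / ((N : ℝ) + 1) := by
        rw [norm_inv]
        rw [show ((N : ℂ) + 1) = (((N : ℝ) + 1 : ℝ) : ℂ) by push_cast; ring]
        rw [Complex.norm_real, Real.norm_of_nonneg (by positivity), one_div]
      rw [hnormc]
      have hb : ‖u (N+1) - ρ₀‖ ≤ 2 := by
        calc ‖u (N+1) - ρ₀‖ ≤ ‖u (N+1)‖ + ‖ρ₀‖ := norm_sub_le _ _
          _ ≤ 1 + 1 := by
              gcongr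
              · rw [Matrix.norm_le_iff zero_le_one]
                exact fun i j => DctcAux.psd_entry_bound (hu (N+1)).1 (hu (N+1)).2 i j
              · rw [Matrix.norm_le_iff zero_le_one]
                exact fun i j => DctcAux.psd_entry_bound hρ₀.1 hρ₀.2 i j
          _ = 2 := by norm_num
      have : (0:ℝ) ≤ 1 / ((N : ℝ) + 1) := by positivity
      nlinarith [norm_nonneg (u (N+1) - ρ₀)]
    · have h := tendsto_one_div_add_atTop_nhds_zero_nat (𝕜 := ℝ)
      have := h.mul_const 2
      simpa using this
  have hsub0 : Filter.Tendsto (fun j => Φ (s (φ j)) - s (φ j)) Filter.atTop (nhds 0) :=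
    hdiff0.comp hφ.tendsto_atTop
  have hsubρ : Filter.Tendsto (fun j => Φ (s (φ j)) - s (φ j)) Filter.atTop (nhds (Φ ρ - ρ)) := by
    exact ((hΦcont.tendsto ρ).comp hlim).sub hlim
  have : Φ ρ - ρ = 0 := tendsto_nhds_unique hsubρ hsub0
  exact ⟨ρ, hρK.1, hρK.2, by rwa [sub_eq_zero] at this⟩
end

section
/- Let H, K, C be nonempty finite types and let Φ : Matrix (H × C) (H × C) ℂ →ₗ[ℂ] Matrix (K × C) (K × C) ℂ be a positive trace-preserving linear map. Then for every density matrix ρ on H there exists a density matrix τ on C satisfying Deutsch's fixed-point equation Tr₁(Φ (ρ ⊗ₖ τ)) = τ, where Tr₁ denotes the partial trace over the first factor K. -/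
open scoped ComplexOrder Kronecker
open Matrix Filter Topology

lemma posSemidef_iff_eq_transpose_mul_self {n : Type*} [Fintype n] {A : Matrix n n ℂ} :
    A.PosSemidef ↔ ∃ B : Matrix n n ℂ, A = Bᴴ * B := by
  classical
  open scoped MatrixOrder in
  constructor
  · intro hA
    obtain ⟨X, hX, -, rfl⟩ :=
      CFC.exists_sqrt_of_isSelfAdjoint_of_quasispectrumRestricts hA.isHermitian
        (QuasispectrumRestricts.nnreal_of_nonneg hA.nonneg)
    refine ⟨X, ?_⟩
    rw [← Matrix.star_eq_conjTranspose, hX.star_eq]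
  · rintro ⟨B, rfl⟩
    exact posSemidef_conjTranspose_mul_self B

lemma aux_kron_psd {H C : Type*} [Fintype H] [Fintype C] {A : Matrix H H ℂ} {B : Matrix C C ℂ}
    (hA : A.PosSemidef) (hB : B.PosSemidef) : (A ⊗ₖ B).PosSemidef := by
  obtain ⟨P, rfl⟩ := posSemidef_iff_eq_transpose_mul_self.mp hA
  obtain ⟨Q, rfl⟩ := posSemidef_iff_eq_transpose_mul_self.mp hB
  rw [Matrix.mul_kronecker_mul]
  have : Pᴴ ⊗ₖ Qᴴ = (P ⊗ₖ Q)ᴴ := by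
    ext ⟨i,j⟩ ⟨k,l⟩
    simp [Matrix.conjTranspose_apply, mul_comm]
  rw [this]
  exact posSemidef_conjTranspose_mul_self _

section aux
variable {C : Type*} [Fintype C] [DecidableEq C]

lemma aux_smul_psd (r : ℝ) (hr : 0 ≤ r) {M : Matrix C C ℂ} (hM : M.PosSemidef) :
    ((r : ℂ) • M).PosSemidef := by
  rw [posSemidef_iff_dotProduct_mulVec]
  constructor
  · ext i j
    simp [Matrix.conjTranspose_apply, hM.1.apply]
  · intro x
    rw [Matrix.smul_mulVec, dotProduct_smul, smul_eq_mul]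
    exact mul_nonneg (by exact_mod_cast Complex.zero_le_real.2 hr) (hM.dotProduct_mulVec_nonneg x)

lemma aux_entry_bound (τ : Matrix C C ℂ) (h : τ.PosSemidef) (ht : τ.trace = 1) (i j : C) :
    ‖τ i j‖ ≤ 1 := by
  have h1 : ∀ l, 0 ≤ τ l l := fun l => by
    simpa [dotProduct, Pi.single_apply] using h.dotProduct_mulVec_nonneg (Pi.single l 1)
  have hle : ∀ l, (τ l l).re ≤ 1 := by
    intro l
    have h2 : τ l l ≤ 1 := by
      calc τ l l ≤ ∑ m, τ m m := Finset.single_le_sum (fun m _ => h1 m) (Finset.mem_univ l)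
      _ = 1 := ht
    rw [Complex.le_def] at h2
    simpa using h2.1
  obtain ⟨B, rfl⟩ := posSemidef_iff_eq_transpose_mul_self.mp h
  set x : EuclideanSpace ℂ C := WithLp.toLp 2 (fun k => B k i) with hx
  set y : EuclideanSpace ℂ C := WithLp.toLp 2 (fun k => B k j) with hy
  have hinner : (Bᴴ * B) i j = inner ℂ x y := by
    simp [PiLp.inner_apply, Matrix.mul_apply, Matrix.conjTranspose_apply, hx, hy,
      RCLike.inner_apply, mul_comm]
  have hnx : ‖x‖ ≤ 1 := by
    have : ‖x‖ ^ 2 = ((Bᴴ * B) i i).re := by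
      rw [← inner_self_eq_norm_sq (𝕜 := ℂ) x]
      simp [PiLp.inner_apply, Matrix.mul_apply, Matrix.conjTranspose_apply, hx,
        RCLike.inner_apply, mul_comm, -inner_self_eq_norm_sq_to_K]
    nlinarith [norm_nonneg x, hle i]
  have hny : ‖y‖ ≤ 1 := by
    have : ‖y‖ ^ 2 = ((Bᴴ * B) j j).re := by
      rw [← inner_self_eq_norm_sq (𝕜 := ℂ) y]
      simp [PiLp.inner_apply, Matrix.mul_apply, Matrix.conjTranspose_apply, hy,
        RCLike.inner_apply, mul_comm, -inner_self_eq_norm_sq_to_K]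
    nlinarith [norm_nonneg y, hle j]
  rw [hinner]
  calc ‖(inner ℂ x y : ℂ)‖ ≤ ‖x‖ * ‖y‖ := norm_inner_le_norm x y
  _ ≤ 1 := by nlinarith [norm_nonneg x, norm_nonneg y]

lemma aux_isCompact_density :
    IsCompact {τ : Matrix C C ℂ | τ.PosSemidef ∧ τ.trace = 1} := by
  have hc : ∀ i j : C, Continuous fun τ : Matrix C C ℂ => τ i j := fun i j =>
    (continuous_apply j).comp (continuous_apply i)
  have hK : IsCompact {τ : Matrix C C ℂ | (∀ i j, ‖τ i j‖ ≤ 1)} := by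
    have : {τ : Matrix C C ℂ | (∀ i j, ‖τ i j‖ ≤ 1)} =
        Set.univ.pi (fun _ : C => Set.univ.pi fun _ : C => Metric.closedBall (0:ℂ) 1) := by
      ext τ
      constructor
      · intro h i _ j _; exact mem_closedBall_zero_iff.2 (h i j)
      · intro h i j; exact mem_closedBall_zero_iff.1 (h i (Set.mem_univ i) j (Set.mem_univ j))
    rw [this]
    exact isCompact_univ_pi fun i => isCompact_univ_pi fun j => isCompact_closedBall 0 1
  have hCl : IsClosed {τ : Matrix C C ℂ | τ.PosSemidef ∧ τ.trace = 1} := by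
    have h1 : IsClosed {τ : Matrix C C ℂ | τ.IsHermitian} := by
      have : {τ : Matrix C C ℂ | τ.IsHermitian} =
          ⋂ i, ⋂ j, {τ : Matrix C C ℂ | star (τ j i) = τ i j} := by
        ext τ
        simp only [Set.mem_iInter, Set.mem_setOf_eq, Matrix.IsHermitian]
        constructor
        · intro h i j; exact congrFun (congrFun h i) j
        · intro h; ext i j; exact h i j
      rw [this]
      refine isClosed_iInter fun i => isClosed_iInter fun j => ?_
      exact isClosed_eq (Complex.continuous_conj.comp (hc j i)) (hc i j)
    have h2 : IsClosed {τ : Matrix C C ℂ | ∀ x : C → ℂ, 0 ≤ star x ⬝ᵥ (τ *ᵥ x)} := by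
      have : {τ : Matrix C C ℂ | ∀ x : C → ℂ, 0 ≤ star x ⬝ᵥ (τ *ᵥ x)} =
          ⋂ x : C → ℂ, {τ : Matrix C C ℂ | 0 ≤ star x ⬝ᵥ (τ *ᵥ x)} := by
        ext; simp
      rw [this]
      refine isClosed_iInter fun x => ?_
      have hcont : Continuous fun τ : Matrix C C ℂ => star x ⬝ᵥ (τ *ᵥ x) := by
        simp only [dotProduct, mulVec]
        exact continuous_finset_sum _ fun i _ => Continuous.mul continuous_const
          (continuous_finset_sum _ fun j _ => ((hc i j).mul continuous_const))
      have : {τ : Matrix C C ℂ | 0 ≤ star x ⬝ᵥ (τ *ᵥ x)} =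
          (fun τ : Matrix C C ℂ => star x ⬝ᵥ (τ *ᵥ x)) ⁻¹' {z : ℂ | 0 ≤ z} := rfl
      rw [this]
      refine IsClosed.preimage hcont ?_
      have : {z : ℂ | 0 ≤ z} = Complex.re ⁻¹' (Set.Ici 0) ∩ Complex.im ⁻¹' {0} := by
        ext z
        simp [Complex.le_def, eq_comm]
      rw [this]
      exact (isClosed_Ici.preimage Complex.continuous_re).inter
        (isClosed_singleton.preimage Complex.continuous_im)
    have h3 : IsClosed {τ : Matrix C C ℂ | τ.trace = 1} := by
      have hcont : Continuous fun τ : Matrix C C ℂ => τ.trace :=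
        continuous_finset_sum _ fun i _ => hc i i
      exact isClosed_eq hcont continuous_const
    have : {τ : Matrix C C ℂ | τ.PosSemidef ∧ τ.trace = 1} =
        ({τ : Matrix C C ℂ | τ.IsHermitian} ∩ {τ | ∀ x : C → ℂ, 0 ≤ star x ⬝ᵥ (τ *ᵥ x)}) ∩
          {τ | τ.trace = 1} := by
      ext τ; simp [posSemidef_iff_dotProduct_mulVec, and_assoc]
    rw [this]
    exact (h1.inter h2).inter h3
  refine hK.of_isClosed_subset hCl ?_
  intro τ hτ
  exact fun i j => aux_entry_bound τ hτ.1 hτ.2 i j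

set_option maxHeartbeats 1000000 in
lemma aux_exists_fixed [Nonempty C] (Ψ : Matrix C C ℂ →ₗ[ℂ] Matrix C C ℂ)
    (hΨ : ∀ τ : Matrix C C ℂ, τ.PosSemidef → τ.trace = 1 →
      (Ψ τ).PosSemidef ∧ (Ψ τ).trace = 1) :
    ∃ τ : Matrix C C ℂ, τ.PosSemidef ∧ τ.trace = 1 ∧ Ψ τ = τ := by
  set S : Set (Matrix C C ℂ) := {τ | τ.PosSemidef ∧ τ.trace = 1} with hS
  have hcard : (0:ℝ) < (Fintype.card C : ℝ) := by positivity
  set τ₀ : Matrix C C ℂ := (((Fintype.card C : ℝ)⁻¹ : ℝ) : ℂ) • 1 with hτ₀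
  have hτ₀S : τ₀ ∈ S := by
    constructor
    · exact aux_smul_psd ((Fintype.card C : ℝ)⁻¹) (by positivity)
        (Matrix.PosSemidef.one : (1 : Matrix C C ℂ).PosSemidef)
    · rw [hτ₀, Matrix.trace_smul, Matrix.trace_one]
      push_cast
      rw [smul_eq_mul]
      field_simp
  -- iterates
  set g : ℕ → Matrix C C ℂ := fun k => Ψ^[k] τ₀ with hg
  have hgS : ∀ k, g k ∈ S := by
    intro k
    induction k with
    | zero => simpa [hg] using hτ₀S
    | succ k ih =>
      have : g (k+1) = Ψ (g k) := by
        simp [hg, Function.iterate_succ_apply']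
      rw [this]
      exact hΨ _ ih.1 ih.2
  -- Cesàro averages
  set c : ℕ → ℝ := fun n => ((n:ℝ)+1)⁻¹ with hc
  have hcn : ∀ n, 0 ≤ c n := fun n => by positivity
  set f : ℕ → Matrix C C ℂ :=
    fun n => ((c n : ℝ) : ℂ) • ∑ k ∈ Finset.range (n+1), g k with hf
  have hfS : ∀ n, f n ∈ S := by
    intro n
    have hpsd : (∑ k ∈ Finset.range (n+1), g k).PosSemidef := by
      apply Finset.sum_induction _ _ (fun a b ha hb => ha.add hb) Matrix.PosSemidef.zero
      intro k _
      exact (hgS k).1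
    constructor
    · simp only [hf]
      exact aux_smul_psd (c n) (hcn n) hpsd
    · simp only [hf]
      simp only [Matrix.trace_smul, Matrix.trace_sum]
      rw [Finset.sum_congr rfl fun k _ => (hgS k).2]
      simp only [Finset.sum_const, Finset.card_range, nsmul_eq_mul, mul_one, smul_eq_mul]
      have h4 : ((n:ℝ)+1) ≠ 0 := by positivity
      simp only [hc]
      push_cast
      field_simp
  -- key identity
  have hkey : ∀ n, Ψ (f n) = f n + ((c n : ℝ) : ℂ) • (g (n+1) - g 0) := by
    intro n
    have h1 : Ψ (∑ k ∈ Finset.range (n+1), g k)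
        = ∑ k ∈ Finset.range (n+1), g (k+1) := by
      rw [map_sum]
      refine Finset.sum_congr rfl fun k _ => ?_
      simp [hg, Function.iterate_succ_apply']
    have h2 : ∑ k ∈ Finset.range (n+1), g (k+1)
        = (∑ k ∈ Finset.range (n+1), g k) + (g (n+1) - g 0) := by
      have := Finset.sum_range_succ' g (n+1)
      have h3 := Finset.sum_range_succ g (n+1)
      -- ∑_{k<n+2} g k = ∑_{k<n+1} g(k+1) + g 0  and  = ∑_{k<n+1} g k + g (n+1)
      rw [h3] at this
      -- this : ∑_{k<n+1} g k + g (n+1) = ∑_{k<n+1} g (k+1) + g 0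
      rw [← sub_eq_iff_eq_add] at this
      rw [← this]
      abel
    simp only [hf]
    rw [_root_.map_smul, h1, h2, smul_add]
  -- compactness
  haveI : FirstCountableTopology (Matrix C C ℂ) :=
    inferInstanceAs (FirstCountableTopology (C → C → ℂ))
  obtain ⟨τ, hτS, φ, hφ, hlim⟩ := aux_isCompact_density.tendsto_subseq hfS
  refine ⟨τ, hτS.1, hτS.2, ?_⟩
  have hcontΨ : Continuous Ψ := Ψ.continuous_of_finiteDimensional
  have hlim2 : Tendsto (fun n => Ψ (f (φ n))) atTop (𝓝 (Ψ τ)) :=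
    (hcontΨ.tendsto τ).comp hlim
  -- error term tends to 0
  have herr : Tendsto (fun n => ((c (φ n) : ℝ) : ℂ) • (g (φ n + 1) - g 0)) atTop
      (𝓝 (0 : Matrix C C ℂ)) := by
    refine tendsto_pi_nhds.mpr ?_
    intro i
    rw [tendsto_pi_nhds]
    intro j
    simp only [Matrix.smul_apply, Matrix.sub_apply, smul_eq_mul, Pi.zero_apply]
    apply squeeze_zero_norm (a := fun n => c (φ n) * 2)
    · intro n
      rw [norm_mul]
      gcongr
      · have h5 : ‖((c (φ n) : ℝ) : ℂ)‖ = ‖c (φ n)‖ := Complex.norm_real _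
        rw [h5, Real.norm_eq_abs]
        exact le_of_eq (abs_of_nonneg (hcn _))
      · calc ‖g (φ n + 1) i j - g 0 i j‖ ≤ ‖g (φ n + 1) i j‖ + ‖g 0 i j‖ := norm_sub_le _ _
        _ ≤ 1 + 1 := by
            gcongr
            · exact aux_entry_bound _ (hgS _).1 (hgS _).2 i j
            · exact aux_entry_bound _ (hgS _).1 (hgS _).2 i j
        _ = 2 := by norm_num
    · have h1 : Tendsto (fun n => c (φ n)) atTop (𝓝 0) := by
        apply Tendsto.comp tendsto_inv_atTop_zero
        apply tendsto_atTop_add_const_right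
        exact tendsto_natCast_atTop_atTop.comp hφ.tendsto_atTop
      simpa using h1.mul_const 2
  have hlim3 : Tendsto (fun n => Ψ (f (φ n))) atTop (𝓝 (τ + 0)) := by
    have : (fun n => Ψ (f (φ n)))
        = fun n => f (φ n) + ((c (φ n) : ℝ) : ℂ) • (g (φ n + 1) - g 0) := by
      funext n; exact hkey (φ n)
    rw [this]
    exact Tendsto.add hlim herr
  rw [add_zero] at hlim3
  exact tendsto_nhds_unique hlim2 hlim3
end aux


set_option maxHeartbeats 1000000 in
/-- For every positive trace-preserving channel `Φ` from `H ⊗ C` to `K ⊗ C` and every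
density matrix `ρ` on `H`, there is a density matrix `τ` on `C` satisfying Deutsch's
fixed-point equation `Tr₁(Φ(ρ ⊗ τ)) = τ`. -/
theorem dctc_fixed_point_equation {H K C : Type*}
    [Fintype H] [Fintype K] [Fintype C] [Nonempty H] [Nonempty K] [Nonempty C]
    (Φ : Matrix (H × C) (H × C) ℂ →ₗ[ℂ] Matrix (K × C) (K × C) ℂ)
    (hpos : ∀ M : Matrix (H × C) (H × C) ℂ, M.PosSemidef → (Φ M).PosSemidef)
    (htr : ∀ M : Matrix (H × C) (H × C) ℂ, (Φ M).trace = M.trace)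
    (ρ : Matrix H H ℂ) (hρ : ρ.PosSemidef) (hρtr : ρ.trace = 1) :
    ∃ τ : Matrix C C ℂ, τ.PosSemidef ∧ τ.trace = 1 ∧
      (Matrix.of fun i j : C => ∑ k : K, (Φ (ρ ⊗ₖ τ)) (k, i) (k, j)) = τ := by
  classical
  let Ψ : Matrix C C ℂ →ₗ[ℂ] Matrix C C ℂ :=
    { toFun := fun τ => Matrix.of fun i j : C => ∑ k : K, (Φ (ρ ⊗ₖ τ)) (k, i) (k, j)
      map_add' := by
        intro τ τ'
        ext i j
        simp [Matrix.kronecker_add, Finset.sum_add_distrib]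
      map_smul' := by
        intro r τ
        ext i j
        simp [Matrix.kronecker_smul, Finset.mul_sum] }
  have hΨapply : ∀ τ : Matrix C C ℂ,
      Ψ τ = Matrix.of fun i j : C => ∑ k : K, (Φ (ρ ⊗ₖ τ)) (k, i) (k, j) := fun τ => rfl
  have hmain : ∀ τ : Matrix C C ℂ, τ.PosSemidef → τ.trace = 1 →
      (Ψ τ).PosSemidef ∧ (Ψ τ).trace = 1 := by
    intro τ hps htr1
    have hk : (ρ ⊗ₖ τ).PosSemidef := aux_kron_psd hρ hps
    have h5 : (Φ (ρ ⊗ₖ τ)).PosSemidef := hpos _ hk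
    constructor
    · have heq : Ψ τ = ∑ k : K, (Φ (ρ ⊗ₖ τ)).submatrix (Prod.mk k) (Prod.mk k) := by
        ext i j
        rw [hΨapply]
        simp [Matrix.sum_apply]
      rw [heq]
      apply Finset.sum_induction _ _ (fun a b ha hb => ha.add hb) Matrix.PosSemidef.zero
      intro k _
      exact h5.submatrix _
    · have heq : (Ψ τ).trace = (Φ (ρ ⊗ₖ τ)).trace := by
        rw [hΨapply]
        simp only [Matrix.trace, Matrix.diag, Matrix.of_apply, Fintype.sum_prod_type]
        exact Finset.sum_comm
      rw [heq, htr, Matrix.trace_kronecker, hρtr, htr1, one_mul]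
  obtain ⟨τ, h1, h2, h3⟩ := aux_exists_fixed Ψ hmain
  exact ⟨τ, h1, h2, by rw [← hΨapply]; exact h3⟩
end

section
/- Let a, b, c, d be nonempty finite types and let h : Matrix a a ℂ →ₗ[ℂ] Matrix b b ℂ, g : Matrix b b ℂ →ₗ[ℂ] Matrix c c ℂ, f : Matrix c c ℂ →ₗ[ℂ] Matrix d d ℂ be positive linear maps. Then the renormalized composition is associative: (f ∘' g) ∘' h = f ∘' (g ∘' h). -/
open scoped ComplexOrder
open Matrix

namespace RcompAux

lemma diag_nonneg {n : Type*} [Fintype n] [DecidableEq n] {M : Matrix n n ℂ}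
    (hM : M.PosSemidef) (i : n) : 0 ≤ M i i := by
  exact hM.diag_nonneg

lemma trace_nonneg {n : Type*} [Fintype n] {M : Matrix n n ℂ}
    (hM : M.PosSemidef) : 0 ≤ M.trace := by
  classical
  exact Finset.sum_nonneg fun i _ => diag_nonneg hM i

lemma smul_psd {n : Type*} [Fintype n] {c : ℂ} (hc : 0 ≤ c) {M : Matrix n n ℂ}
    (hM : M.PosSemidef) : (c • M).PosSemidef := by
  refine posSemidef_iff_dotProduct_mulVec.mpr ⟨?_, fun x => ?_⟩
  · rw [IsHermitian, conjTranspose_smul, hM.1.eq, (IsSelfAdjoint.of_nonneg hc).star_eq]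
  · rw [smul_mulVec, dotProduct_smul, smul_eq_mul]
    exact mul_nonneg hc (hM.dotProduct_mulVec_nonneg x)

lemma inv_card_nonneg (n : Type*) [Fintype n] : (0:ℂ) ≤ (Fintype.card n : ℂ)⁻¹ := by
  have h : (0:ℝ) ≤ ((Fintype.card n : ℝ))⁻¹ := by positivity
  have h2 := Complex.zero_le_real.mpr h
  push_cast at h2
  exact h2

lemma rho_psd (n : Type*) [Fintype n] [DecidableEq n] :
    ((Fintype.card n : ℂ)⁻¹ • (1 : Matrix n n ℂ)).PosSemidef :=
  smul_psd (inv_card_nonneg n) Matrix.PosSemidef.one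

lemma sub_smul_one_psd {n : Type*} [Fintype n] [DecidableEq n] {M : Matrix n n ℂ}
    (hM : M.PosSemidef) : (M.trace • (1 : Matrix n n ℂ) - M).PosSemidef := by
  have hH := hM.1
  have hspec := hH.spectral_theorem
  rw [Unitary.conjStarAlgAut_apply] at hspec
  set U : Matrix n n ℂ := (hH.eigenvectorUnitary : Matrix n n ℂ) with hU
  have hUU : U * Uᴴ = 1 := by
    rw [← Matrix.star_eq_conjTranspose]
    exact (Matrix.mem_unitaryGroup_iff).mp hH.eigenvectorUnitary.2
  have htr : M.trace = ∑ i, (hH.eigenvalues i : ℂ) := by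
    conv_lhs => rw [hspec]
    have hUU' : star U * U = 1 := Matrix.mem_unitaryGroup_iff'.mp hH.eigenvectorUnitary.2
    rw [Matrix.trace_mul_cycle, hUU', one_mul, Matrix.trace_diagonal]
    simp
  have key : M.trace • (1 : Matrix n n ℂ) - M
      = U * (diagonal (fun i => M.trace - (hH.eigenvalues i : ℂ))) * Uᴴ := by
    rw [← Matrix.star_eq_conjTranspose]
    have h1 : M.trace • (1 : Matrix n n ℂ) = U * (M.trace • (1 : Matrix n n ℂ)) * star U := by
      rw [Matrix.mul_smul, Matrix.smul_mul, mul_one]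
      rw [← Matrix.star_eq_conjTranspose] at hUU
      rw [hUU]
    have h2 : M.trace • (1 : Matrix n n ℂ) - diagonal (RCLike.ofReal ∘ hH.eigenvalues)
        = diagonal (fun i => M.trace - (hH.eigenvalues i : ℂ)) := by
      ext i j
      rcases eq_or_ne i j with rfl | hij
      · simp [Matrix.one_apply, Function.comp]
      · simp [Matrix.one_apply_ne hij, Matrix.diagonal_apply_ne _ hij]
    calc M.trace • (1 : Matrix n n ℂ) - M
        = U * (M.trace • (1 : Matrix n n ℂ)) * star U
          - U * diagonal (RCLike.ofReal ∘ hH.eigenvalues) * star U := by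
          rw [← h1, ← hspec]
      _ = U * (M.trace • (1 : Matrix n n ℂ) - diagonal (RCLike.ofReal ∘ hH.eigenvalues))
          * star U := by rw [Matrix.mul_sub, Matrix.sub_mul]
      _ = U * (diagonal (fun i => M.trace - (hH.eigenvalues i : ℂ))) * star U := by rw [h2]
  rw [key]
  refine Matrix.PosSemidef.mul_mul_conjTranspose_same ?_ U
  refine Matrix.posSemidef_diagonal_iff.mpr fun i => ?_
  rw [htr]
  have h2 : (hH.eigenvalues i : ℂ) ≤ ∑ j, (hH.eigenvalues j : ℂ) := by
    have : hH.eigenvalues i ≤ ∑ j, hH.eigenvalues j :=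
      Finset.single_le_sum (fun j _ => hM.eigenvalues_nonneg j) (Finset.mem_univ i)
    calc (hH.eigenvalues i : ℂ) ≤ ((∑ j, hH.eigenvalues j : ℝ) : ℂ) := by
          exact_mod_cast Complex.real_le_real.mpr this
      _ = ∑ j, (hH.eigenvalues j : ℂ) := by push_cast; ring
  exact sub_nonneg.mpr h2

lemma trace_comp_smul {a b c : Type*} [Fintype a] [Fintype b] [Fintype c]
    (f : Matrix b b ℂ →ₗ[ℂ] Matrix c c ℂ) (g : Matrix a a ℂ →ₗ[ℂ] Matrix b b ℂ)
    (t : ℂ) (M N : Matrix a a ℂ) :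
    (f (g (t • M - N))).trace = t * (f (g M)).trace - (f (g N)).trace := by
  rw [map_sub, map_sub, LinearMap.map_smul, LinearMap.map_smul, Matrix.trace_sub,
    Matrix.trace_smul, smul_eq_mul]

end RcompAux

/-- The renormalized composition of the category `Mix_sym` of Oreshkov and Cerf:
`f ∘' g := Tr[f(g(𝟙/d))]⁻¹ • (f ∘ₗ g)` when the normalization scalar is nonzero,
and `0` otherwise. -/
noncomputable def rcomp {a b c : Type*} [Fintype a] [Fintype b] [Fintype c] [DecidableEq a]
    (f : Matrix b b ℂ →ₗ[ℂ] Matrix c c ℂ) (g : Matrix a a ℂ →ₗ[ℂ] Matrix b b ℂ) :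
    Matrix a a ℂ →ₗ[ℂ] Matrix c c ℂ :=
  if (f (g ((Fintype.card a : ℂ)⁻¹ • (1 : Matrix a a ℂ)))).trace = 0 then 0
  else ((f (g ((Fintype.card a : ℂ)⁻¹ • (1 : Matrix a a ℂ)))).trace)⁻¹ • (f ∘ₗ g)

/-- The renormalized composition of positive maps is associative, so that `Mix_sym`
(the categorical model of the P-CTC model) is a category. -/
theorem rcomp_assoc {a b c d : Type*}
    [Fintype a] [Fintype b] [Fintype c] [Fintype d]
    [Nonempty a] [Nonempty b] [Nonempty c] [Nonempty d]
    [DecidableEq a] [DecidableEq b]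
    (h : Matrix a a ℂ →ₗ[ℂ] Matrix b b ℂ)
    (g : Matrix b b ℂ →ₗ[ℂ] Matrix c c ℂ)
    (f : Matrix c c ℂ →ₗ[ℂ] Matrix d d ℂ)
    (hh : ∀ M : Matrix a a ℂ, M.PosSemidef → (h M).PosSemidef)
    (hg : ∀ M : Matrix b b ℂ, M.PosSemidef → (g M).PosSemidef)
    (hf : ∀ M : Matrix c c ℂ, M.PosSemidef → (f M).PosSemidef) :
    rcomp (rcomp f g) h = rcomp f (rcomp g h) := by
  classical
  set ρa : Matrix a a ℂ := (Fintype.card a : ℂ)⁻¹ • (1 : Matrix a a ℂ) with hρa_def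
  set ρb : Matrix b b ℂ := (Fintype.card b : ℂ)⁻¹ • (1 : Matrix b b ℂ) with hρb_def
  have hρa : ρa.PosSemidef := RcompAux.rho_psd a
  have hρb : ρb.PosSemidef := RcompAux.rho_psd b
  set c1 : ℂ := (f (g ρb)).trace with hc1_def
  set c2 : ℂ := (g (h ρa)).trace with hc2_def
  set T : ℂ := (f (g (h ρa))).trace with hT_def
  have hTnn : 0 ≤ T := RcompAux.trace_nonneg (hf _ (hg _ (hh _ hρa)))
  -- key 1 : c1 = 0 → T = 0
  have key1 : c1 = 0 → T = 0 := by
    intro hc1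
    have hfg1 : (f (g (1 : Matrix b b ℂ))).trace = 0 := by
      have hcb : ((Fintype.card b : ℂ)) ≠ 0 := by
        exact_mod_cast Fintype.card_ne_zero
      have : c1 = (Fintype.card b : ℂ)⁻¹ * (f (g (1 : Matrix b b ℂ))).trace := by
        rw [hc1_def, hρb_def, LinearMap.map_smul, LinearMap.map_smul, Matrix.trace_smul,
          smul_eq_mul]
      rw [hc1] at this
      field_simp at this
      simpa using this.symm
    have hpsd := RcompAux.sub_smul_one_psd (hh _ hρa)
    have hnn : 0 ≤ (f (g ((h ρa).trace • (1 : Matrix b b ℂ) - h ρa))).trace :=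
      RcompAux.trace_nonneg (hf _ (hg _ hpsd))
    rw [RcompAux.trace_comp_smul, hfg1, mul_zero, zero_sub, ← hT_def] at hnn
    exact le_antisymm (by simpa using hnn) hTnn
  -- key 2 : c2 = 0 → T = 0
  have key2 : c2 = 0 → T = 0 := by
    intro hc2
    have hpsd := RcompAux.sub_smul_one_psd (hg _ (hh _ hρa))
    rw [← hc2_def, hc2, zero_smul, zero_sub] at hpsd
    have hnn : 0 ≤ (f (-(g (h ρa)))).trace := RcompAux.trace_nonneg (hf _ hpsd)
    rw [map_neg, Matrix.trace_neg, ← hT_def] at hnn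
    exact le_antisymm (by simpa using hnn) hTnn
  -- unfold
  rw [rcomp, rcomp, rcomp, rcomp]
  rw [← hρa_def, ← hρb_def, ← hc1_def, ← hc2_def]
  by_cases hc1 : c1 = 0
  · have hT : T = 0 := key1 hc1
    rw [if_pos hc1]
    simp only [LinearMap.zero_apply, Matrix.trace_zero, if_pos rfl]
    by_cases hc2 : c2 = 0
    · simp [hc2]
    · rw [if_neg hc2]
      have : (f ((c2⁻¹ • (g ∘ₗ h)) ρa)).trace = c2⁻¹ * T := by
        simp [LinearMap.smul_apply, Matrix.trace_smul, smul_eq_mul, hT_def]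
      rw [this, hT, mul_zero]
      simp
  · rw [if_neg hc1]
    have hLsc : ((c1⁻¹ • (f ∘ₗ g)) (h ρa)).trace = c1⁻¹ * T := by
      simp [LinearMap.smul_apply, Matrix.trace_smul, smul_eq_mul, hT_def]
    rw [hLsc]
    by_cases hc2 : c2 = 0
    · have hT : T = 0 := key2 hc2
      simp [hc2, hT]
    · rw [if_neg hc2]
      have hRsc : (f ((c2⁻¹ • (g ∘ₗ h)) ρa)).trace = c2⁻¹ * T := by
        simp [LinearMap.smul_apply, Matrix.trace_smul, smul_eq_mul, hT_def]
      rw [hRsc]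
      by_cases hT : T = 0
      · simp [hT]
      · rw [if_neg (by simp [mul_eq_zero, inv_eq_zero, hc1, hT]),
          if_neg (by simp [mul_eq_zero, inv_eq_zero, hc2, hT])]
        rw [LinearMap.smul_comp, LinearMap.comp_smul, smul_smul, smul_smul,
          LinearMap.comp_assoc]
        congr 1
        field_simp
end

section
/- Let a, b, c, a', b', c' be nonempty finite types; let f₂ : Matrix a a ℂ →ₗ[ℂ] Matrix b b ℂ, f₁ : Matrix b b ℂ →ₗ[ℂ] Matrix c c ℂ, g₂ : Matrix a' a' ℂ →ₗ[ℂ] Matrix b' b' ℂ, g₁ : Matrix b' b' ℂ →ₗ[ℂ] Matrix c' c' ℂ be positive linear maps. Let h₂ : Matrix (a × a') (a × a') ℂ →ₗ[ℂ] Matrix (b × b') (b × b') ℂ and h₁ : Matrix (b × b') (b × b') ℂ →ₗ[ℂ] Matrix (c × c') (c × c') ℂ be positive linear maps satisfying h₂ (x ⊗ₖ y) = f₂ x ⊗ₖ g₂ y for all x : Matrix a a ℂ, y : Matrix a' a' ℂ, and h₁ (x ⊗ₖ y) = f₁ x ⊗ₖ g₁ y for all x : Matrix b b ℂ, y : Matrix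 b' b' ℂ. Then for all x : Matrix a a ℂ and y : Matrix a' a' ℂ, (h₁ ∘' h₂) (x ⊗ₖ y) = ((f₁ ∘' f₂) x) ⊗ₖ ((g₁ ∘' g₂) y). -/
open scoped ComplexOrder Kronecker

/-! Since `0⁻¹ = 0` in `ℂ`, the case split in `rcomp` disappears: `f ∘' g = c(f,g)⁻¹ • (f ∘ g)`
always. The maximally mixed state on `a × a'` is the Kronecker product of those on `a` and `a'`,
so for maps acting factorwise the scalar `c` is multiplicative, and the interchange law follows
from `(s • X) ⊗ₖ (t • Y) = (s * t) • (X ⊗ₖ Y)`. -/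

section RenormalizedComposition

variable {a b c a' b' c' : Type*}

theorem comp_kronecker_of_kronecker
    {f₂ : Matrix a a ℂ →ₗ[ℂ] Matrix b b ℂ} {f₁ : Matrix b b ℂ →ₗ[ℂ] Matrix c c ℂ}
    {g₂ : Matrix a' a' ℂ →ₗ[ℂ] Matrix b' b' ℂ} {g₁ : Matrix b' b' ℂ →ₗ[ℂ] Matrix c' c' ℂ}
    {h₂ : Matrix (a × a') (a × a') ℂ →ₗ[ℂ] Matrix (b × b') (b × b') ℂ}
    {h₁ : Matrix (b × b') (b × b') ℂ →ₗ[ℂ] Matrix (c × c') (c × c') ℂ}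
    (hten₂ : ∀ x y, h₂ (x ⊗ₖ y) = f₂ x ⊗ₖ g₂ y) (hten₁ : ∀ x y, h₁ (x ⊗ₖ y) = f₁ x ⊗ₖ g₁ y)
    (x : Matrix a a ℂ) (y : Matrix a' a' ℂ) :
    (h₁ ∘ₗ h₂) (x ⊗ₖ y) = (f₁ ∘ₗ f₂) x ⊗ₖ (g₁ ∘ₗ g₂) y := by
  rw [LinearMap.comp_apply, hten₂, hten₁, LinearMap.comp_apply, LinearMap.comp_apply]

variable [Fintype a] [Fintype c] [Fintype a'] [Fintype c'] [DecidableEq a] [DecidableEq a']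

variable (a) in
noncomputable def maxMixed : Matrix a a ℂ := (Fintype.card a : ℂ)⁻¹ • 1

theorem maxMixed_prod : maxMixed (a × a') = maxMixed a ⊗ₖ maxMixed a' := by
  rw [maxMixed, maxMixed, maxMixed, Matrix.smul_kronecker, Matrix.kronecker_smul,
    Matrix.one_kronecker_one, smul_smul, Fintype.card_prod, Nat.cast_mul, mul_inv]

noncomputable def rcompScalar (f : Matrix b b ℂ →ₗ[ℂ] Matrix c c ℂ)
    (g : Matrix a a ℂ →ₗ[ℂ] Matrix b b ℂ) : ℂ :=
  (f (g (maxMixed a))).trace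

theorem rcomp_eq_inv_smul_comp [Fintype b] (f : Matrix b b ℂ →ₗ[ℂ] Matrix c c ℂ)
    (g : Matrix a a ℂ →ₗ[ℂ] Matrix b b ℂ) :
    rcomp f g = (rcompScalar f g)⁻¹ • (f ∘ₗ g) := by
  unfold rcomp
  split_ifs with h
  · rw [rcompScalar, maxMixed, h, inv_zero, zero_smul]
  · rfl

theorem rcompScalar_of_kronecker
    {f₂ : Matrix a a ℂ →ₗ[ℂ] Matrix b b ℂ} {f₁ : Matrix b b ℂ →ₗ[ℂ] Matrix c c ℂ}
    {g₂ : Matrix a' a' ℂ →ₗ[ℂ] Matrix b' b' ℂ} {g₁ : Matrix b' b' ℂ →ₗ[ℂ] Matrix c' c' ℂ}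
    {h₂ : Matrix (a × a') (a × a') ℂ →ₗ[ℂ] Matrix (b × b') (b × b') ℂ}
    {h₁ : Matrix (b × b') (b × b') ℂ →ₗ[ℂ] Matrix (c × c') (c × c') ℂ}
    (hten₂ : ∀ x y, h₂ (x ⊗ₖ y) = f₂ x ⊗ₖ g₂ y) (hten₁ : ∀ x y, h₁ (x ⊗ₖ y) = f₁ x ⊗ₖ g₁ y) :
    rcompScalar h₁ h₂ = rcompScalar f₁ f₂ * rcompScalar g₁ g₂ := by
  rw [rcompScalar, maxMixed_prod, ← LinearMap.comp_apply h₁,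
    comp_kronecker_of_kronecker hten₂ hten₁, Matrix.trace_kronecker]
  rfl

end RenormalizedComposition

theorem rcomp_kronecker_interchange_general {a b c a' b' c' : Type*}
    [Fintype a] [Fintype b] [Fintype c] [Fintype a'] [Fintype b'] [Fintype c']
    [DecidableEq a] [DecidableEq a']
    (f₂ : Matrix a a ℂ →ₗ[ℂ] Matrix b b ℂ)
    (f₁ : Matrix b b ℂ →ₗ[ℂ] Matrix c c ℂ)
    (g₂ : Matrix a' a' ℂ →ₗ[ℂ] Matrix b' b' ℂ)
    (g₁ : Matrix b' b' ℂ →ₗ[ℂ] Matrix c' c' ℂ)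
    (h₂ : Matrix (a × a') (a × a') ℂ →ₗ[ℂ] Matrix (b × b') (b × b') ℂ)
    (h₁ : Matrix (b × b') (b × b') ℂ →ₗ[ℂ] Matrix (c × c') (c × c') ℂ)
    (hten₂ : ∀ (x : Matrix a a ℂ) (y : Matrix a' a' ℂ), h₂ (x ⊗ₖ y) = f₂ x ⊗ₖ g₂ y)
    (hten₁ : ∀ (x : Matrix b b ℂ) (y : Matrix b' b' ℂ), h₁ (x ⊗ₖ y) = f₁ x ⊗ₖ g₁ y) :
    ∀ (x : Matrix a a ℂ) (y : Matrix a' a' ℂ),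
      (rcomp h₁ h₂) (x ⊗ₖ y) = ((rcomp f₁ f₂) x) ⊗ₖ ((rcomp g₁ g₂) y) := by
  intro x y
  rw [rcomp_eq_inv_smul_comp, rcomp_eq_inv_smul_comp, rcomp_eq_inv_smul_comp,
    rcompScalar_of_kronecker hten₂ hten₁, LinearMap.smul_apply, LinearMap.smul_apply,
    LinearMap.smul_apply, comp_kronecker_of_kronecker hten₂ hten₁, Matrix.smul_kronecker,
    Matrix.kronecker_smul, smul_smul, mul_inv, mul_comm]

/-- Interchange law between the renormalized composition of `Mix_sym` and the
Kronecker (tensor) product: part of the claim that `Mix_sym` is a symmetric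
monoidal category. -/
theorem rcomp_kronecker_interchange {a b c a' b' c' : Type*}
    [Fintype a] [Fintype b] [Fintype c] [Fintype a'] [Fintype b'] [Fintype c']
    [Nonempty a] [Nonempty b] [Nonempty c] [Nonempty a'] [Nonempty b'] [Nonempty c']
    [DecidableEq a] [DecidableEq a']
    (f₂ : Matrix a a ℂ →ₗ[ℂ] Matrix b b ℂ)
    (f₁ : Matrix b b ℂ →ₗ[ℂ] Matrix c c ℂ)
    (g₂ : Matrix a' a' ℂ →ₗ[ℂ] Matrix b' b' ℂ)
    (g₁ : Matrix b' b' ℂ →ₗ[ℂ] Matrix c' c' ℂ)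
    (h₂ : Matrix (a × a') (a × a') ℂ →ₗ[ℂ] Matrix (b × b') (b × b') ℂ)
    (h₁ : Matrix (b × b') (b × b') ℂ →ₗ[ℂ] Matrix (c × c') (c × c') ℂ)
    (hf₂ : ∀ M : Matrix a a ℂ, M.PosSemidef → (f₂ M).PosSemidef)
    (hf₁ : ∀ M : Matrix b b ℂ, M.PosSemidef → (f₁ M).PosSemidef)
    (hg₂ : ∀ M : Matrix a' a' ℂ, M.PosSemidef → (g₂ M).PosSemidef)
    (hg₁ : ∀ M : Matrix b' b' ℂ, M.PosSemidef → (g₁ M).PosSemidef)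
    (hh₂ : ∀ M : Matrix (a × a') (a × a') ℂ, M.PosSemidef → (h₂ M).PosSemidef)
    (hh₁ : ∀ M : Matrix (b × b') (b × b') ℂ, M.PosSemidef → (h₁ M).PosSemidef)
    (hten₂ : ∀ (x : Matrix a a ℂ) (y : Matrix a' a' ℂ), h₂ (x ⊗ₖ y) = f₂ x ⊗ₖ g₂ y)
    (hten₁ : ∀ (x : Matrix b b ℂ) (y : Matrix b' b' ℂ), h₁ (x ⊗ₖ y) = f₁ x ⊗ₖ g₁ y) :
    ∀ (x : Matrix a a ℂ) (y : Matrix a' a' ℂ),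
      (rcomp h₁ h₂) (x ⊗ₖ y) = ((rcomp f₁ f₂) x) ⊗ₖ ((rcomp g₁ g₂) y) :=
  rcomp_kronecker_interchange_general f₂ f₁ g₂ g₁ h₂ h₁ hten₂ hten₁
end

section
/- A density matrix τ : Matrix (Fin 2) (Fin 2) ℂ (i.e. τ.PosSemidef and τ.trace = 1) satisfies the fixed-point equation τ 0 0 = τ 1 1, τ 1 1 = τ 0 0, τ 0 1 = 0 and τ 1 0 = 0 (that is, τ = !![τ 1 1, 0; 0, τ 0 0]) if and only if τ = (2 : ℂ)⁻¹ • 1. In other words, the maximally mixed state is the unique solution of Deutsch's consistency condition for the grandfather's paradox circuit. -/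
open scoped ComplexOrder

namespace Matrix

variable {R : Type*}

theorem fin_two_eq_smul_one_iff [Semiring R] (A : Matrix (Fin 2) (Fin 2) R) (c : R) :
    A = c • 1 ↔ A 0 0 = c ∧ A 0 1 = 0 ∧ A 1 0 = 0 ∧ A 1 1 = c := by
  rw [← Matrix.ext_iff]
  simp [Fin.forall_fin_two, Matrix.one_apply, and_assoc]

theorem fin_two_eq_inv_two_smul_one_iff_of_trace_eq_one [Field R] [NeZero (2 : R)]
    (A : Matrix (Fin 2) (Fin 2) R) (htr : A.trace = 1) :
    A = (2 : R)⁻¹ • 1 ↔ A 0 0 = A 1 1 ∧ A 0 1 = 0 ∧ A 1 0 = 0 := by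
  have hsum : A 0 0 + A 1 1 = 1 := by rwa [trace_fin_two] at htr
  rw [fin_two_eq_smul_one_iff]
  constructor
  · rintro ⟨h00, h01, h10, h11⟩
    exact ⟨h00.trans h11.symm, h01, h10⟩
  · rintro ⟨hdiag, h01, h10⟩
    have h11 : A 1 1 = 2⁻¹ := by
      rw [hdiag, ← two_mul] at hsum
      exact eq_inv_of_mul_eq_one_right hsum
    exact ⟨hdiag.trans h11, h01, h10, h11⟩

end Matrix

theorem grandfather_paradox_unique_fixed_point_general
    (τ : Matrix (Fin 2) (Fin 2) ℂ) (htr : τ.trace = 1) :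
    (τ 0 0 = τ 1 1 ∧ τ 1 1 = τ 0 0 ∧ τ 0 1 = 0 ∧ τ 1 0 = 0) ↔
      τ = (2 : ℂ)⁻¹ • (1 : Matrix (Fin 2) (Fin 2) ℂ) := by
  rw [τ.fin_two_eq_inv_two_smul_one_iff_of_trace_eq_one htr]
  exact ⟨fun ⟨hdiag, _, h01, h10⟩ => ⟨hdiag, h01, h10⟩,
    fun ⟨hdiag, h01, h10⟩ => ⟨hdiag, hdiag.symm, h01, h10⟩⟩

/-- The maximally mixed state is the unique density-matrix solution of Deutsch's
consistency condition for the grandfather's paradox circuit: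
`τ = !![τ 1 1, 0; 0, τ 0 0]`. -/
theorem grandfather_paradox_unique_fixed_point
    (τ : Matrix (Fin 2) (Fin 2) ℂ) (hpsd : τ.PosSemidef) (htr : τ.trace = 1) :
    (τ 0 0 = τ 1 1 ∧ τ 1 1 = τ 0 0 ∧ τ 0 1 = 0 ∧ τ 1 0 = 0) ↔
      τ = (2 : ℂ)⁻¹ • (1 : Matrix (Fin 2) (Fin 2) ℂ) :=
  grandfather_paradox_unique_fixed_point_general τ htr
end

section
/- Let A and B be nonempty finite types, and let U : Matrix ((A × B) × B) ((A × B) × B) ℂ be the permutation matrix swapping the last two factors: U ((a,b),c) ((a',b'),c') = 1 if a = a' ∧ b = c' ∧ c = b', and 0 otherwise. Let ρ be a density matrix on A × B, and write ρ_A := Tr₂ ρ (the partial trace over B) and ρ_B := Tr₁ ρ (the partial trace over A). Then: (i) for every density matrix τ on B, the partial trace over the first factor A × B of U * (ρ ⊗ₖ τ) * Uᴴ equals ρ_B, so τ* := ρ_B is the unique density-matrix solution of Deutsch's fixed-point equation for the swap interaction; (ii) the partial trace over the last factor B of U * (ρ ⊗ₖ τ*) * Uᴴ equals ρ_A ⊗ₖ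 ρ_B; (iii) in particular, for A = B = Fin 2 and ρ the Bell density matrix given by ρ (i,j) (k,l) = 1/2 if i = j ∧ k = l and 0 otherwise, the output ρ_A ⊗ₖ ρ_B = (4 : ℂ)⁻¹ • 1 is not equal to ρ. Hence sending a system through a D-CTC via a swap acts as the identity on every single-system state but maps every bipartite state to the product of its marginals, breaking all entanglement; in particular the D-CTC model violates the yanking axiom of traced monoidal categories and is not locally process tomographic. -/
/-!
Conjugation by the swap only relabels matrix entries, `((a, b), c) ↦ ((a, c), b)`. Tracing out
`A × B` therefore yields `Tr₁ ρ · tr τ = Tr₁ ρ` whatever the CTC state `τ` is, and tracing out the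
last factor yields `Tr₂ ρ ⊗ τ`. Both marginals of the Bell state are maximally mixed, so the
output is `𝟙 / 4`.
-/

open Matrix
open scoped ComplexOrder Kronecker

/-- Partial trace over the first factor: `Tr₁(M) i j = ∑ k, M (k, i) (k, j)`. -/
noncomputable def ptrFst {a b : Type*} [Fintype a] (M : Matrix (a × b) (a × b) ℂ) :
    Matrix b b ℂ :=
  Matrix.of fun i j => ∑ k : a, M (k, i) (k, j)

/-- Partial trace over the second factor: `Tr₂(M) i j = ∑ k, M (i, k) (j, k)`. -/
noncomputable def ptrSnd {a b : Type*} [Fintype b] (M : Matrix (a × b) (a × b) ℂ) :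
    Matrix a a ℂ :=
  Matrix.of fun i j => ∑ k : b, M (i, k) (j, k)

/-- The permutation matrix on `(A × B) × B` swapping the last two factors. -/
noncomputable def swapU (A B : Type*) [DecidableEq A] [DecidableEq B] :
    Matrix ((A × B) × B) ((A × B) × B) ℂ :=
  Matrix.of fun p q =>
    if p.1.1 = q.1.1 ∧ p.1.2 = q.2 ∧ p.2 = q.1.2 then 1 else 0

/-- The Bell density matrix on two qubits. -/
noncomputable def bell : Matrix (Fin 2 × Fin 2) (Fin 2 × Fin 2) ℂ :=
  Matrix.of fun p q => if p.1 = p.2 ∧ q.1 = q.2 then (1 / 2 : ℂ) else 0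

lemma swapU_apply {A B : Type*} [DecidableEq A] [DecidableEq B] (p q : (A × B) × B) :
    swapU A B p q = if q = ((p.1.1, p.2), p.1.2) then 1 else 0 := by
  simp only [swapU, of_apply, Prod.ext_iff]
  exact if_congr (by tauto) rfl rfl

section Swap

variable {A B : Type*} [Fintype A] [Fintype B] [DecidableEq A] [DecidableEq B]

lemma swapU_mul_mul_conjTranspose_apply (M : Matrix ((A × B) × B) ((A × B) × B) ℂ)
    (p q : (A × B) × B) :
    (swapU A B * M * (swapU A B)ᴴ) p q = M ((p.1.1, p.2), p.1.2) ((q.1.1, q.2), q.1.2) := by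
  simp [mul_apply, conjTranspose_apply, swapU_apply, apply_ite]

lemma ptrFst_swapU_conj_kronecker (ρ : Matrix (A × B) (A × B) ℂ) {τ : Matrix B B ℂ}
    (hτ : τ.trace = 1) :
    ptrFst (swapU A B * (ρ ⊗ₖ τ) * (swapU A B)ᴴ) = ptrFst ρ := by
  ext i j
  simp only [ptrFst, of_apply, swapU_mul_mul_conjTranspose_apply, kroneckerMap_apply,
    Fintype.sum_prod_type, ← Finset.mul_sum]
  have hτ' : ∑ c, τ c c = 1 := hτ
  simp [hτ']

lemma ptrSnd_swapU_conj_kronecker (ρ : Matrix (A × B) (A × B) ℂ) (σ : Matrix B B ℂ) :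
    ptrSnd (swapU A B * (ρ ⊗ₖ σ) * (swapU A B)ᴴ) = ptrSnd ρ ⊗ₖ σ := by
  ext p q
  simp only [ptrSnd, of_apply, swapU_mul_mul_conjTranspose_apply, kroneckerMap_apply,
    ← Finset.sum_mul]

end Swap

lemma ptrSnd_bell : ptrSnd bell = (2 : ℂ)⁻¹ • 1 := by
  ext i j
  fin_cases i <;> fin_cases j <;> simp [ptrSnd, bell, Fin.sum_univ_two]

lemma ptrFst_bell : ptrFst bell = (2 : ℂ)⁻¹ • 1 := by
  ext i j
  fin_cases i <;> fin_cases j <;> simp [ptrFst, bell, Fin.sum_univ_two]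

lemma inv_four_smul_one_ne_bell :
    (4 : ℂ)⁻¹ • (1 : Matrix (Fin 2 × Fin 2) (Fin 2 × Fin 2) ℂ) ≠ bell := by
  intro h
  simpa [bell] using congrFun₂ h (0, 0) (1, 1)

/-- Sending a system through a D-CTC via a swap acts as the identity on
single-system states but maps every bipartite state to the product of its
marginals, breaking all entanglement: (i) for any CTC state `τ`, the state
emerging from the CTC is the marginal `ρ_B`, which is thus the unique solution of
Deutsch's fixed-point equation; (ii) the output of the interaction is `ρ_A ⊗ ρ_B`;
(iii) for the Bell state the output `(1/4)𝟙` differs from the input. -/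
theorem dctc_swap_breaks_entanglement :
    (∀ (A B : Type) [Fintype A] [Fintype B] [Nonempty A] [Nonempty B]
        [DecidableEq A] [DecidableEq B]
        (ρ : Matrix (A × B) (A × B) ℂ), ρ.PosSemidef → ρ.trace = 1 →
        ∀ τ : Matrix B B ℂ, τ.PosSemidef → τ.trace = 1 →
          ptrFst (swapU A B * (ρ ⊗ₖ τ) * (swapU A B)ᴴ) = ptrFst ρ ∧
          (ptrFst (swapU A B * (ρ ⊗ₖ τ) * (swapU A B)ᴴ) = τ ↔ τ = ptrFst ρ)) ∧
    (∀ (A B : Type) [Fintype A] [Fintype B] [Nonempty A] [Nonempty B]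
        [DecidableEq A] [DecidableEq B]
        (ρ : Matrix (A × B) (A × B) ℂ), ρ.PosSemidef → ρ.trace = 1 →
          ptrSnd (swapU A B * (ρ ⊗ₖ ptrFst ρ) * (swapU A B)ᴴ) =
            ptrSnd ρ ⊗ₖ ptrFst ρ) ∧
    (ptrSnd bell ⊗ₖ ptrFst bell
        = (4 : ℂ)⁻¹ • (1 : Matrix (Fin 2 × Fin 2) (Fin 2 × Fin 2) ℂ) ∧
      (4 : ℂ)⁻¹ • (1 : Matrix (Fin 2 × Fin 2) (Fin 2 × Fin 2) ℂ) ≠ bell) := by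
  refine ⟨?_, ?_, ?_, inv_four_smul_one_ne_bell⟩
  · intro A B _ _ _ _ _ _ ρ _ _ τ _ hτ
    rw [ptrFst_swapU_conj_kronecker ρ hτ]
    exact ⟨rfl, eq_comm⟩
  · intro A B _ _ _ _ _ _ ρ _ _
    exact ptrSnd_swapU_conj_kronecker ρ (ptrFst ρ)
  · rw [ptrSnd_bell, ptrFst_bell, smul_kronecker, kronecker_smul, one_kronecker_one, smul_smul]
    norm_num
end

section
/- Let E₀₀ = !![1,0;0,0] and E₁₁ = !![0,0;0,1] in Matrix (Fin 2) (Fin 2) ℂ. For every real ε with 0 < ε < 1, there is no ℝ-linear map F : Matrix (Fin 2) (Fin 2) ℂ →ₗ[ℝ] Matrix (Fin 2) (Fin 2) ℂ satisfying F E₀₀ = E₀₀, F E₁₁ = E₀₀, and F ((1−ε) • E₀₀ + ε • E₁₁) = (ε•(1−ε/2) : ℝ) • E₁₁ + ((1−ε+ε²/2) : ℝ) • E₀₀. -/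
/-- The linearity trap: the input–output behavior of the D-CTC circuit of
Appendix C.1 (sending `E₀₀ ↦ E₀₀`, `E₁₁ ↦ E₀₀`, and the noisy state
`(1−ε)E₀₀ + εE₁₁` to `ε(1−ε/2)E₁₁ + (1−ε+ε²/2)E₀₀`) is inconsistent with any
real-linear map, so D-CTC evolutions are not linear. -/
theorem dctc_not_linear (ε : ℝ) (h0 : 0 < ε) (h1 : ε < 1) :
    ¬ ∃ F : Matrix (Fin 2) (Fin 2) ℂ →ₗ[ℝ] Matrix (Fin 2) (Fin 2) ℂ,
      F (!![1, 0; 0, 0] : Matrix (Fin 2) (Fin 2) ℂ) = !![1, 0; 0, 0] ∧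
      F (!![0, 0; 0, 1] : Matrix (Fin 2) (Fin 2) ℂ) = !![1, 0; 0, 0] ∧
      F ((1 - ε) • (!![1, 0; 0, 0] : Matrix (Fin 2) (Fin 2) ℂ)
          + ε • (!![0, 0; 0, 1] : Matrix (Fin 2) (Fin 2) ℂ)) =
        (ε * (1 - ε / 2)) • (!![0, 0; 0, 1] : Matrix (Fin 2) (Fin 2) ℂ)
          + (1 - ε + ε ^ 2 / 2) • (!![1, 0; 0, 0] : Matrix (Fin 2) (Fin 2) ℂ) := by
  rintro ⟨F, h00, h11, hmix⟩
  rw [map_add, map_smul, map_smul, h00, h11] at hmix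
  have h := congrFun (congrFun hmix 1) 1
  simp [Matrix.add_apply, Matrix.smul_apply] at h
  rcases h with h | h
  · have h' : ε = 0 := by exact_mod_cast h
    linarith
  · have h' : (1:ℝ) - ε / 2 = 0 := by rw [← Complex.ofReal_inj]; push_cast; exact h
    linarith
end

section
/- Let Δ : Matrix (Fin 2) (Fin 2) ℂ → Matrix (Fin 2) (Fin 2) ℂ denote decoherence in the computational basis, Δ(τ) i j = τ i j if i = j and 0 otherwise. Let ρ be a density matrix on Fin 2 and let ε be real with 0 < ε < 1. Then a density matrix τ on Fin 2 satisfies τ = (1−ε) • Δ(τ) + ε • Δ(ρ) if and only if τ = Δ(ρ); that is, the decoherence of ρ in the Z basis is the unique solution. Moreover, for ε = 0 the equation τ = Δ(τ) is satisfied exactly by the diagonal density matrices (those with τ i j = 0 whenever i ≠ j). -/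
open scoped ComplexOrder

/-! Decoherence `Δ` is an idempotent linear map. Applying `Δ` to `τ = (1 - ε) Δτ + ε Δρ` gives
`ε Δτ = ε Δρ`, hence `Δτ = Δρ` as `ε ≠ 0`, and substituting back yields `τ = Δρ`. For `ε = 0`
the equation just says that `τ` is diagonal. -/

/-- Decoherence in the computational basis. -/
noncomputable def deco (τ : Matrix (Fin 2) (Fin 2) ℂ) : Matrix (Fin 2) (Fin 2) ℂ :=
  Matrix.of fun i j => if i = j then τ i j else 0

section Projection

variable {K M : Type*} [DivisionRing K] [AddCommGroup M] [Module K M]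

theorem LinearMap.eq_smul_add_smul_iff_of_isIdempotentElem {P : M →ₗ[K] M}
    (hP : IsIdempotentElem P) {c : K} (hc : c ≠ 0) (x y : M) :
    x = (1 - c) • P x + c • P y ↔ x = P y := by
  have hPP : ∀ z, P (P z) = P z := fun z => congr($hP z)
  have hsum : (1 - c) • P y + c • P y = P y := by rw [← add_smul, sub_add_cancel, one_smul]
  constructor
  · intro h
    have hPx : P x = P y := by
      have hPh : P x = (1 - c) • P x + c • P y := by
        conv_lhs => rw [h]
        rw [map_add, map_smul, map_smul, hPP, hPP]
      refine hc.isUnit.smul_left_cancel.mp ?_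
      calc c • P x = P x - (1 - c) • P x := by rw [sub_smul, one_smul, sub_sub_cancel]
        _ = c • P y := by rw [sub_eq_iff_eq_add', ← hPh]
    rwa [hPx, hsum] at h
  · intro h
    rw [h, hPP, hsum]

end Projection

namespace Matrix

variable (n R α : Type*) [DecidableEq n] [Semiring R] [AddCommMonoid α] [Module R α]

def diagProjection : Matrix n n α →ₗ[R] Matrix n n α :=
  diagonalLinearMap n R α ∘ₗ diagLinearMap n R α

variable {n R α}

@[simp]
theorem diagProjection_apply (A : Matrix n n α) : diagProjection n R α A = diagonal A.diag := rfl

theorem isIdempotentElem_diagProjection : IsIdempotentElem (diagProjection n R α) :=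
  LinearMap.ext fun A => by simp [Module.End.mul_apply, diag_diagonal]

end Matrix

theorem deco_eq_diagonal_diag (τ : Matrix (Fin 2) (Fin 2) ℂ) :
    deco τ = Matrix.diagonal τ.diag := by
  ext i j
  by_cases hij : i = j <;> simp [deco, Matrix.diagonal, hij]

theorem dctc_controlled_swap_fixed_points_general
    (ρ : Matrix (Fin 2) (Fin 2) ℂ)
    (ε : ℝ) (h0 : 0 < ε) :
    (∀ τ : Matrix (Fin 2) (Fin 2) ℂ, τ.PosSemidef → τ.trace = 1 →
      (τ = (1 - ε) • deco τ + ε • deco ρ ↔ τ = deco ρ)) ∧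
    (∀ τ : Matrix (Fin 2) (Fin 2) ℂ, τ.PosSemidef → τ.trace = 1 →
      (τ = deco τ ↔ ∀ i j : Fin 2, i ≠ j → τ i j = 0)) := by
  simp only [deco_eq_diagonal_diag]
  refine ⟨fun τ _ _ => ?_, fun τ _ _ => ?_⟩
  · simpa using LinearMap.eq_smul_add_smul_iff_of_isIdempotentElem
      (Matrix.isIdempotentElem_diagProjection (R := ℝ)) h0.ne' τ ρ
  · rw [eq_comm, ← Matrix.isDiag_iff_diagonal_diag]
    rfl

/-- For the controlled-SWAP D-CTC circuit: for `0 < ε < 1` the unique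
density-matrix solution of `τ = (1−ε)Δ(τ) + εΔ(ρ)` is `Δ(ρ)`, while for `ε = 0`
the equation `τ = Δ(τ)` is satisfied exactly by the diagonal density matrices. -/
theorem dctc_controlled_swap_fixed_points
    (ρ : Matrix (Fin 2) (Fin 2) ℂ) (hρ : ρ.PosSemidef) (hρtr : ρ.trace = 1)
    (ε : ℝ) (h0 : 0 < ε) (h1 : ε < 1) :
    (∀ τ : Matrix (Fin 2) (Fin 2) ℂ, τ.PosSemidef → τ.trace = 1 →
      (τ = (1 - ε) • deco τ + ε • deco ρ ↔ τ = deco ρ)) ∧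
    (∀ τ : Matrix (Fin 2) (Fin 2) ℂ, τ.PosSemidef → τ.trace = 1 →
      (τ = deco τ ↔ ∀ i j : Fin 2, i ≠ j → τ i j = 0)) :=
  dctc_controlled_swap_fixed_points_general ρ ε h0
end

section
/- Let α be a partially ordered set which is locally finite in the causal-set sense: for all x z : α, the set {y : α | x ≤ y ∧ y ≤ z} is finite. Then: (i) for all x y : α, x ≤ y if and only if Relation.ReflTransGen (· ⋖ ·) x y, where ⋖ is the covering relation; (ii) the covering relation is non-transitive: if x ⋖ y and y ⋖ z then ¬ (x ⋖ z); (iii) the covering relation is acyclic: for all x, ¬ Relation.TransGen (· ⋖ ·) x x. -/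
open Relation

section CovBy

variable {α : Type*} [Preorder α] {x y z : α}

theorem CovBy.not_covBy_of_covBy (hxy : x ⋖ y) (hyz : y ⋖ z) : ¬ x ⋖ z :=
  fun hxz => hxz.2 hxy.lt hyz.lt

theorem Relation.TransGen.lt_of_covBy (h : TransGen (· ⋖ ·) x y) : x < y :=
  h.trans_induction_on CovBy.lt fun _ _ => lt_trans

theorem not_transGen_covBy_self (x : α) : ¬ TransGen (· ⋖ ·) x x :=
  fun h => h.lt_of_covBy.false

end CovBy

/-- A locally finite partial order (a causal set) gives rise to a non-transitive
acyclic digraph via its covering relation, whose reflexive-transitive closure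
recovers the order. -/
theorem causalSet_to_nontransitive_acyclic_digraph {α : Type*} [PartialOrder α]
    (hlf : ∀ x z : α, {y : α | x ≤ y ∧ y ≤ z}.Finite) :
    (∀ x y : α, x ≤ y ↔ Relation.ReflTransGen (· ⋖ ·) x y) ∧
    (∀ x y z : α, x ⋖ y → y ⋖ z → ¬ x ⋖ z) ∧
    (∀ x : α, ¬ Relation.TransGen (· ⋖ ·) x x) := by
  let : LocallyFiniteOrder α := LocallyFiniteOrder.ofFiniteIcc hlf
  exact ⟨fun _ _ => le_iff_reflTransGen_covBy, fun _ _ _ => CovBy.not_covBy_of_covBy,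
    not_transGen_covBy_self⟩
end

section
/- Let E, H, K, C be nonempty finite types, let Φ : Matrix (H × C) (H × C) ℂ →ₗ[ℂ] Matrix (K × C) (K × C) ℂ be a trace-preserving linear map, and let G : Matrix (E × (H × C)) (E × (H × C)) ℂ →ₗ[ℂ] Matrix (E × (K × C)) (E × (K × C)) ℂ be a linear map satisfying G (x ⊗ₖ y) = x ⊗ₖ Φ y for all x : Matrix E E ℂ and y : Matrix (H × C) (H × C) ℂ. Let τ : Matrix C C ℂ have τ.trace = 1, let ρ : Matrix (E × H) (E × H) ℂ, and let ρ̃ : Matrix (E × (H × C)) (E × (H × C)) ℂ be the reindexing of ρ ⊗ₖ τ along the associativity equivalence (E × H) × C ≃ E × (H × C). Then for all e e' : E, ∑ over pairs (k, c) : K × C of (G ρ̃) (e, (k, c)) (e', (k, c)) equals ∑ over h : H of ρ (e, h) (e', h). That is, discarding the entire output of the D-CTC interaction box is the same as discarding its entire input, for any bipartite extension by an ancilla E. -/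
/-!
Discarding the whole output of `G` is the partial trace over `K × C`. On a product `x ⊗ₖ y` it
returns `(Φ y).trace • x = y.trace • x`, which is the partial trace of the input; since products
span the matrix space, `G` preserves this partial trace on every input. For the input `ρ ⊗ₖ τ`,
tracing out `C` contributes the factor `τ.trace = 1`, leaving the partial trace of `ρ` over `H`.
-/

open scoped Kronecker

namespace Matrix

variable {l m n p R : Type*}

section Kronecker

variable [CommSemiring R] [Fintype l] [Fintype m] [Fintype n] [Fintype p]

theorem linearMap_ext_kronecker {M : Type*} [AddCommMonoid M] [Module R M]
    {f g : Matrix (l × n) (m × p) R →ₗ[R] M} (h : ∀ x y, f (x ⊗ₖ y) = g (x ⊗ₖ y)) : f = g := by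
  classical
  have hcomp : f ∘ₗ (kroneckerLinearEquiv l m n p R).toLinearMap =
      g ∘ₗ (kroneckerLinearEquiv l m n p R).toLinearMap := TensorProduct.ext' h
  ext1 A
  simpa using congr($hcomp ((kroneckerLinearEquiv l m n p R).symm A))

end Kronecker

section Semiring

variable [Semiring R] [Fintype n]

def traceRight : Matrix (m × n) (m × n) R →ₗ[R] Matrix m m R where
  toFun M := of fun i j => ∑ k, M (i, k) (j, k)
  map_add' M N := by ext; simp [Finset.sum_add_distrib]
  map_smul' c M := by ext; simp [Finset.mul_sum]

@[simp]
theorem traceRight_apply (M : Matrix (m × n) (m × n) R) (i j : m) :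
    traceRight M i j = ∑ k, M (i, k) (j, k) :=
  rfl

theorem traceRight_reindex_prodAssoc [Fintype m] (M : Matrix ((l × m) × n) ((l × m) × n) R) :
    traceRight (reindex (Equiv.prodAssoc l m n) (Equiv.prodAssoc l m n) M) =
      traceRight (traceRight M) := by
  ext i j
  simp [Fintype.sum_prod_type]

end Semiring

section CommSemiring

variable [CommSemiring R] [Fintype n]

theorem traceRight_kronecker (A : Matrix m m R) (B : Matrix n n R) :
    traceRight (A ⊗ₖ B) = B.trace • A := by
  ext i j
  simp [trace, Finset.mul_sum, mul_comm]

theorem traceRight_comp_of_map_kronecker [Fintype m] [Fintype p]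
    (Φ : Matrix n n R →ₗ[R] Matrix p p R) (hΦ : ∀ M, (Φ M).trace = M.trace)
    (G : Matrix (m × n) (m × n) R →ₗ[R] Matrix (m × p) (m × p) R)
    (hG : ∀ x y, G (x ⊗ₖ y) = x ⊗ₖ Φ y) :
    traceRight ∘ₗ G = traceRight :=
  linearMap_ext_kronecker fun x y => by
    simp only [LinearMap.comp_apply, hG, traceRight_kronecker, hΦ]

end CommSemiring

end Matrix

open Matrix in
theorem dctc_discard_output_eq_discard_input_general {E H K C : Type*}
    [Fintype E] [Fintype H] [Fintype K] [Fintype C]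
    (Φ : Matrix (H × C) (H × C) ℂ →ₗ[ℂ] Matrix (K × C) (K × C) ℂ)
    (hΦ : ∀ M : Matrix (H × C) (H × C) ℂ, (Φ M).trace = M.trace)
    (G : Matrix (E × (H × C)) (E × (H × C)) ℂ →ₗ[ℂ] Matrix (E × (K × C)) (E × (K × C)) ℂ)
    (hG : ∀ (x : Matrix E E ℂ) (y : Matrix (H × C) (H × C) ℂ), G (x ⊗ₖ y) = x ⊗ₖ Φ y)
    (τ : Matrix C C ℂ) (hτ : τ.trace = 1)
    (ρ : Matrix (E × H) (E × H) ℂ) :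
    ∀ e e' : E,
      ∑ p : K × C,
          (G ((Matrix.reindex (Equiv.prodAssoc E H C) (Equiv.prodAssoc E H C)) (ρ ⊗ₖ τ)))
            (e, p) (e', p) =
        ∑ h : H, ρ (e, h) (e', h) := by
  intro e e'
  have hpreserve := congr($(traceRight_comp_of_map_kronecker Φ hΦ G hG)
    (reindex (Equiv.prodAssoc E H C) (Equiv.prodAssoc E H C) (ρ ⊗ₖ τ)) e e')
  rwa [LinearMap.comp_apply, traceRight_reindex_prodAssoc, traceRight_kronecker, hτ, one_smul]
    at hpreserve

/-- Core of terminality of `DMix`: discarding the full output of the D-CTC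
interaction box (with trace-preserving interaction `Φ` and any state `τ` of the
chronology-violating system) equals discarding its input, for any bipartite
extension by an ancilla `E`. -/
theorem dctc_discard_output_eq_discard_input {E H K C : Type*}
    [Fintype E] [Fintype H] [Fintype K] [Fintype C]
    [Nonempty E] [Nonempty H] [Nonempty K] [Nonempty C]
    (Φ : Matrix (H × C) (H × C) ℂ →ₗ[ℂ] Matrix (K × C) (K × C) ℂ)
    (hΦ : ∀ M : Matrix (H × C) (H × C) ℂ, (Φ M).trace = M.trace)
    (G : Matrix (E × (H × C)) (E × (H × C)) ℂ →ₗ[ℂ] Matrix (E × (K × C)) (E × (K × C)) ℂ)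
    (hG : ∀ (x : Matrix E E ℂ) (y : Matrix (H × C) (H × C) ℂ), G (x ⊗ₖ y) = x ⊗ₖ Φ y)
    (τ : Matrix C C ℂ) (hτ : τ.trace = 1)
    (ρ : Matrix (E × H) (E × H) ℂ) :
    ∀ e e' : E,
      ∑ p : K × C,
          (G ((Matrix.reindex (Equiv.prodAssoc E H C) (Equiv.prodAssoc E H C)) (ρ ⊗ₖ τ)))
            (e, p) (e', p) =
        ∑ h : H, ρ (e, h) (e', h) :=
  dctc_discard_output_eq_discard_input_general Φ hΦ G hG τ hτ ρ
end

section
/- Let E, H, K, C be nonempty finite types, let Φ : Matrix (H × C) (H × C) ℂ →ₗ[ℂ] Matrix (K × C) (K × C) ℂ be a linear map, and let G : Matrix (E × (H × C)) (E × (H × C)) ℂ →ₗ[ℂ] Matrix (E × (K × C)) (E × (K × C)) ℂ be a linear map satisfying G (x ⊗ₖ y) = x ⊗ₖ Φ y for all x : Matrix E E ℂ and y : Matrix (H × C) (H × C) ℂ. Let ρ : Matrix (E × H) (E × H) ℂ and τ : Matrix C C ℂ, and let ρ̃ be the reindexing of ρ ⊗ₖ τ along the associativity equivalence (E × H) ×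 C ≃ E × (H × C). Then for all c c' : C, ∑ over e : E and k : K of (G ρ̃) (e, (k, c)) (e, (k, c')) equals ∑ over k : K of (Φ ((Tr_E ρ) ⊗ₖ τ)) (k, c) (k, c'), where Tr_E ρ : Matrix H H ℂ is given by (Tr_E ρ) i j = ∑ e, ρ (e, i) (e, j). That is, the chronology-violating system's fixed-point equation in the presence of an untouched ancilla E depends only on the reduced state of ρ on H. -/
/-!
Tracing out `E` commutes with any map of the form `id ⊗ Φ`: on a Kronecker product `x ⊗ₖ y` both
sides give `trace x • Φ y`, and every matrix on `E × X` is a sum of Kronecker products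
`single e e' 1 ⊗ₖ (block e e')`. Applied to `ρ ⊗ₖ τ`, whose partial trace over `E` is
`(Tr_E ρ) ⊗ₖ τ`, this gives the identity entrywise.
-/

open scoped Kronecker

namespace Matrix

variable {R : Type*} [CommSemiring R] {E X Y : Type*} [Fintype E]

def traceLeft : Matrix (E × X) (E × Y) R →ₗ[R] Matrix X Y R where
  toFun M := of fun i j => ∑ e, M (e, i) (e, j)
  map_add' M N := by ext; simp [Finset.sum_add_distrib]
  map_smul' r M := by ext; simp [Finset.mul_sum]

@[simp]
theorem traceLeft_apply (M : Matrix (E × X) (E × Y) R) (i : X) (j : Y) :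
    traceLeft M i j = ∑ e, M (e, i) (e, j) :=
  rfl

theorem traceLeft_kronecker (A : Matrix E E R) (B : Matrix X Y R) :
    traceLeft (A ⊗ₖ B) = A.trace • B := by
  ext i j
  simp [trace, Finset.sum_mul]

theorem sum_single_kronecker_blocks [DecidableEq E] (M : Matrix (E × X) (E × Y) R) :
    ∑ e, ∑ e', single e e' (1 : R) ⊗ₖ (of fun i j => M (e, i) (e', j)) = M := by
  ext ⟨a, i⟩ ⟨a', j⟩
  simp [sum_apply, single_apply, ite_and]

theorem traceLeft_map_of_map_kronecker {X' Y' : Type*}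
    (Φ : Matrix X Y R →ₗ[R] Matrix X' Y' R)
    (G : Matrix (E × X) (E × Y) R →ₗ[R] Matrix (E × X') (E × Y') R)
    (hG : ∀ (x : Matrix E E R) (y : Matrix X Y R), G (x ⊗ₖ y) = x ⊗ₖ Φ y)
    (M : Matrix (E × X) (E × Y) R) :
    traceLeft (G M) = Φ (traceLeft M) := by
  classical
  rw [← sum_single_kronecker_blocks M]
  simp only [map_sum, hG, traceLeft_kronecker, map_smul]

theorem traceLeft_reindex_prodAssoc_kronecker {H H' C C' : Type*}
    (ρ : Matrix (E × H) (E × H') R) (τ : Matrix C C' R) :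
    traceLeft (reindex (Equiv.prodAssoc E H C) (Equiv.prodAssoc E H' C') (ρ ⊗ₖ τ)) =
      traceLeft ρ ⊗ₖ τ := by
  ext ⟨i, c⟩ ⟨j, c'⟩
  simp [Finset.sum_mul]

end Matrix

theorem dctc_strength_fixed_point_reduced_general {E H K C : Type*}
    [Fintype E] [Fintype K]
    (Φ : Matrix (H × C) (H × C) ℂ →ₗ[ℂ] Matrix (K × C) (K × C) ℂ)
    (G : Matrix (E × (H × C)) (E × (H × C)) ℂ →ₗ[ℂ] Matrix (E × (K × C)) (E × (K × C)) ℂ)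
    (hG : ∀ (x : Matrix E E ℂ) (y : Matrix (H × C) (H × C) ℂ), G (x ⊗ₖ y) = x ⊗ₖ Φ y)
    (ρ : Matrix (E × H) (E × H) ℂ) (τ : Matrix C C ℂ) :
    ∀ c c' : C,
      ∑ e : E, ∑ k : K,
          (G ((Matrix.reindex (Equiv.prodAssoc E H C) (Equiv.prodAssoc E H C)) (ρ ⊗ₖ τ)))
            (e, (k, c)) (e, (k, c')) =
        ∑ k : K,
          (Φ ((Matrix.of fun i j : H => ∑ e : E, ρ (e, i) (e, j)) ⊗ₖ τ)) (k, c) (k, c') := by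
  intro c c'
  rw [Finset.sum_comm]
  simp only [← Matrix.traceLeft_apply]
  rw [Matrix.traceLeft_map_of_map_kronecker Φ G hG,
    Matrix.traceLeft_reindex_prodAssoc_kronecker]
  rfl

/-- Core of the strength axiom for Deutsch's D-CTC super-operator: the
fixed-point equation of the chronology-violating system, in the presence of an
untouched ancilla `E`, depends only on the reduced state of `ρ` on `H`. -/
theorem dctc_strength_fixed_point_reduced {E H K C : Type*}
    [Fintype E] [Fintype H] [Fintype K] [Fintype C]
    [Nonempty E] [Nonempty H] [Nonempty K] [Nonempty C]
    (Φ : Matrix (H × C) (H × C) ℂ →ₗ[ℂ] Matrix (K × C) (K × C) ℂ)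
    (G : Matrix (E × (H × C)) (E × (H × C)) ℂ →ₗ[ℂ] Matrix (E × (K × C)) (E × (K × C)) ℂ)
    (hG : ∀ (x : Matrix E E ℂ) (y : Matrix (H × C) (H × C) ℂ), G (x ⊗ₖ y) = x ⊗ₖ Φ y)
    (ρ : Matrix (E × H) (E × H) ℂ) (τ : Matrix C C ℂ) :
    ∀ c c' : C,
      ∑ e : E, ∑ k : K,
          (G ((Matrix.reindex (Equiv.prodAssoc E H C) (Equiv.prodAssoc E H C)) (ρ ⊗ₖ τ)))
            (e, (k, c)) (e, (k, c')) =
        ∑ k : K,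
          (Φ ((Matrix.of fun i j : H => ∑ e : E, ρ (e, i) (e, j)) ⊗ₖ τ)) (k, c) (k, c') :=
  dctc_strength_fixed_point_reduced_general Φ G hG ρ τ
end

section
/- Let d be a nonempty finite type, N : ℕ, and ρ a density matrix on d. Define σ : Matrix (Fin (N+1) → d) (Fin (N+1) → d) ℂ by σ x y = ∏ i, ρ (x i) (y i) (the (N+1)-fold Kronecker power of ρ), and let P : Matrix (Fin (N+1) → d) (Fin (N+1) → d) ℂ be the permutation matrix P x y = 1 if x = y ∘ finRotate (N+1) and 0 otherwise, implementing a cyclic shift of the N+1 tensor factors. Then the partial trace over the factor indexed by 0 of P * σ * Pᴴ, i.e. the matrix T : Matrix (Fin N → d) (Fin N → d) ℂ with T x y = ∑ k : d, (P * σ * Pᴴ) (Fin.cons k x) (Fin.cons k y), satisfies T x y = ∏ i, ρ (x i) (y i). That is, the N-fold Kronecker power ρ^{⊗N} is a fixed point of Deutsch's update map for the cyclic-shift cloning circuit: feeding in a fresh copy of ρ, cyclically shifting the N+1 systems, and discarding the outgoing system returns ρ^{⊗N}. -/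
open Matrix
open scoped ComplexOrder

/-!
Conjugating by the permutation matrix of a relabelling of the tensor factors only reindexes the
product `∏ i, ρ (u i) (v i)`, so `ρ^{⊗(N+1)}` is invariant under the cyclic shift. Tracing out the
first factor of `ρ^{⊗(N+1)}` then leaves `(trace ρ) • ρ^{⊗N} = ρ^{⊗N}`.
-/

section

variable {d ι R : Type*}

def Equiv.Perm.permuteFactors (σ : Equiv.Perm ι) (d : Type*) : Equiv.Perm (ι → d) :=
  σ.arrowCongr (Equiv.refl d)

@[simp]
theorem Equiv.Perm.permuteFactors_apply (σ : Equiv.Perm ι) (u : ι → d) :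
    σ.permuteFactors d u = u ∘ σ.symm :=
  rfl

namespace Matrix

def tensorPow [CommMonoid R] (ρ : Matrix d d R) (ι : Type*) [Fintype ι] :
    Matrix (ι → d) (ι → d) R :=
  of fun u v => ∏ i, ρ (u i) (v i)

theorem permMatrix_mul_mul_conjTranspose [Fintype ι] [DecidableEq ι] [NonAssocSemiring R]
    [StarRing R] (σ : Equiv.Perm ι) (A : Matrix ι ι R) :
    σ.permMatrix R * A * (σ.permMatrix R)ᴴ = A.submatrix σ σ := by
  rw [conjTranspose_permMatrix, PEquiv.toMatrix_toPEquiv_mul, PEquiv.mul_toMatrix_toPEquiv,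
    submatrix_submatrix]
  rfl

theorem permMatrix_permuteFactors [DecidableEq d] [Fintype ι] [Zero R] [One R]
    (σ : Equiv.Perm ι) :
    (σ.permuteFactors d).permMatrix R = of fun u v => if u = v ∘ σ then 1 else 0 := by
  ext u v
  simp only [PEquiv.toMatrix_apply, Equiv.toPEquiv_apply, Option.mem_def, Option.some_inj,
    of_apply, Equiv.Perm.permuteFactors_apply]
  exact if_congr (Equiv.comp_symm_eq σ v u) rfl rfl

theorem tensorPow_submatrix_permuteFactors [CommMonoid R] [Fintype ι] (ρ : Matrix d d R)
    (σ : Equiv.Perm ι) :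
    (tensorPow ρ ι).submatrix (σ.permuteFactors d) (σ.permuteFactors d) =
      tensorPow ρ ι := by
  ext u v
  exact Equiv.prod_comp σ.symm fun i => ρ (u i) (v i)

theorem sum_tensorPow_cons [Fintype d] [CommSemiring R] (ρ : Matrix d d R) {N : ℕ}
    (x y : Fin N → d) :
    ∑ k, tensorPow ρ (Fin (N + 1)) (Fin.cons k x) (Fin.cons k y) =
      ρ.trace * tensorPow ρ (Fin N) x y := by
  simp only [tensorPow, of_apply, Fin.prod_univ_succ, Fin.cons_zero, Fin.cons_succ,
    ← Finset.sum_mul]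
  rfl

end Matrix

end

theorem dctc_cloning_fixed_point_general {d : Type*} [Fintype d] [DecidableEq d]
    (N : ℕ) (ρ : Matrix d d ℂ) (hρtr : ρ.trace = 1) :
    ∀ x y : Fin N → d,
      (∑ k : d,
        ((Matrix.of fun u v : Fin (N + 1) → d =>
              if u = v ∘ finRotate (N + 1) then (1 : ℂ) else 0) *
            (Matrix.of fun u v : Fin (N + 1) → d => ∏ i, ρ (u i) (v i)) *
            (Matrix.of fun u v : Fin (N + 1) → d =>
              if u = v ∘ finRotate (N + 1) then (1 : ℂ) else 0)ᴴ)
          (Fin.cons k x) (Fin.cons k y)) =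
      ∏ i, ρ (x i) (y i) := by
  intro x y
  set shift := (finRotate (N + 1)).permuteFactors d
  calc _ = ∑ k, (tensorPow ρ (Fin (N + 1))).submatrix shift shift
          (Fin.cons k x) (Fin.cons k y) := by
        rw [← permMatrix_permuteFactors, permMatrix_mul_mul_conjTranspose]
        rfl
    _ = ρ.trace * tensorPow ρ (Fin N) x y := by
        rw [tensorPow_submatrix_permuteFactors, sum_tensorPow_cons]
    _ = ∏ i, ρ (x i) (y i) := by
        rw [hρtr, one_mul]
        rfl

/-- The `N`-fold Kronecker power `ρ^{⊗N}` is a fixed point of Deutsch's update map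
for the cyclic-shift cloning circuit: feeding in a fresh copy of `ρ`, cyclically
shifting the `N+1` systems, and discarding the outgoing system returns `ρ^{⊗N}`. -/
theorem dctc_cloning_fixed_point {d : Type*} [Fintype d] [Nonempty d] [DecidableEq d]
    (N : ℕ) (ρ : Matrix d d ℂ) (hρ : ρ.PosSemidef) (hρtr : ρ.trace = 1) :
    ∀ x y : Fin N → d,
      (∑ k : d,
        ((Matrix.of fun u v : Fin (N + 1) → d =>
              if u = v ∘ finRotate (N + 1) then (1 : ℂ) else 0) *
            (Matrix.of fun u v : Fin (N + 1) → d => ∏ i, ρ (u i) (v i)) *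
            (Matrix.of fun u v : Fin (N + 1) → d =>
              if u = v ∘ finRotate (N + 1) then (1 : ℂ) else 0)ᴴ)
          (Fin.cons k x) (Fin.cons k y)) =
      ∏ i, ρ (x i) (y i) :=
  dctc_cloning_fixed_point_general N ρ hρtr
end
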